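/- Let A be a finite alphabet with at least two letters, u ∈ A*, π a permutation of A, w a prefix of Pal(u), and let σ be the w-conjugate of ψ_u ∘ π. Then for all letters a ≠ b in A: Pal(u) = gcs(σ(ab), σ(ba)) · gcp(σ(ab), σ(ba)) (concatenation of the longest common suffix followed by the longest common prefix). -/

import Mathlib

open List

section EpiDefs

variable {A : Type*}

/-- The episturmian generator ψ_a : a ↦ a, b ↦ ab for b ≠ a, as a map on words. -/
def psiL [DecidableEq A] (a : A) : List A → List A :=
  fun u => (u.map (fun b => if b = a then [a] else [a, b])).flatten

/-- The episturmian generator ψ̄_a : a ↦ a, b ↦ ba for b ≠ a, as a map on words. -/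
def psibarL [DecidableEq A] (a : A) : List A → List A :=
  fun u => (u.map (fun b => if b = a then [a] else [b, a])).flatten

/-- ψ_{u₁⋯uₙ} = ψ_{u₁} ∘ ⋯ ∘ ψ_{uₙ}. -/
def psiW [DecidableEq A] (u : List A) : List A → List A :=
  u.foldr (fun a f => psiL a ∘ f) id

/-- ψ̄_{u₁⋯uₙ} = ψ̄_{u₁} ∘ ⋯ ∘ ψ̄_{uₙ}. -/
def psibarW [DecidableEq A] (u : List A) : List A → List A :=
  u.foldr (fun a f => psibarL a ∘ f) id

/-- There is a shortest palindrome having `x` as a prefix. -/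
theorem exists_isPalClosure (x : List A) :
    ∃ p : List A, (p.reverse = p ∧ x <+: p) ∧
      ∀ q : List A, q.reverse = q → x <+: q → p.length ≤ q.length := by
  classical
  have hex : ∃ n : ℕ, ∃ p : List A, (p.reverse = p ∧ x <+: p) ∧ p.length = n :=
    ⟨(x ++ x.reverse).length, x ++ x.reverse, ⟨by simp, ⟨x.reverse, rfl⟩⟩, rfl⟩
  obtain ⟨p, hp, hlen⟩ := Nat.find_spec hex
  refine ⟨p, hp, fun q h1 h2 => ?_⟩
  rw [hlen]
  exact Nat.find_le ⟨q, ⟨h1, h2⟩, rfl⟩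

/-- `palPlus x = x⁽⁺⁾` is the shortest palindrome having `x` as a prefix. -/
noncomputable def palPlus (x : List A) : List A :=
  Classical.choose (exists_isPalClosure x)

/-- Iterated palindromic closure: Pal(ε) = ε, Pal(ua) = (Pal(u)a)⁽⁺⁾. -/
noncomputable def pal (u : List A) : List A :=
  u.foldl (fun p a => palPlus (p ++ [a])) []

/-- Longest common prefix. -/
def gcp [DecidableEq A] : List A → List A → List A
  | a :: x, b :: y => if a = b then a :: gcp x y else []
  | _, _ => []

/-- Longest common suffix. -/
def gcs [DecidableEq A] (x y : List A) : List A :=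
  (gcp x.reverse y.reverse).reverse

/-- The language of a (primitive) substitution: factors of σⁿ(a). -/
def LangS (σ : List A → List A) : Set (List A) :=
  {x | ∃ (n : ℕ) (a : A), x <:+: σ^[n] [a]}

/-- The language of the episturmian shift directed by `d`. -/
def LangD (d : ℕ → A) : Set (List A) :=
  {x | ∃ n : ℕ, x <:+: pal ((List.range n).map d)}

def LeftSpecial (L : Set (List A)) (v : List A) : Prop :=
  ∃ a b : A, a ≠ b ∧ a :: v ∈ L ∧ b :: v ∈ L

def RightSpecial (L : Set (List A)) (v : List A) : Prop :=
  ∃ a b : A, a ≠ b ∧ v ++ [a] ∈ L ∧ v ++ [b] ∈ L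

/-- The left return set of `u` in the language `L`. -/
def leftReturn (L : Set (List A)) (u : List A) : Set (List A) :=
  {r | r ++ u ∈ L ∧ (∃ s : List A, s ≠ [] ∧ r ++ u = u ++ s) ∧
    ¬∃ p q : List A, p ≠ [] ∧ q ≠ [] ∧ r ++ u = p ++ u ++ q}

/-- The right return set of `u` in the language `L`. -/
def rightReturn (L : Set (List A)) (u : List A) : Set (List A) :=
  {r | u ++ r ∈ L ∧ (∃ p : List A, p ≠ [] ∧ u ++ r = p ++ u) ∧
    ¬∃ p q : List A, p ≠ [] ∧ q ≠ [] ∧ u ++ r = p ++ u ++ q}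

/-- `σ` is an endomorphism of the free monoid A*. -/
def IsListHom (σ : List A → List A) : Prop :=
  ∀ x y : List A, σ (x ++ y) = σ x ++ σ y

/-- Primitivity of a substitution. -/
def IsPrimitiveSubst (σ : List A → List A) : Prop :=
  ∃ k : ℕ, 1 ≤ k ∧ ∀ a b : A, b ∈ σ^[k] [a]

/-- At least two distinct letters occur infinitely often in `d`. -/
def NonDegenerate (d : ℕ → A) : Prop :=
  ∃ a b : A, a ≠ b ∧ (∀ N : ℕ, ∃ n : ℕ, N ≤ n ∧ d n = a) ∧
    (∀ N : ℕ, ∃ n : ℕ, N ≤ n ∧ d n = b)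

end EpiDefs

set_option linter.unusedSectionVars false
section Dev
variable {A : Type*} [DecidableEq A]
variable [DecidableEq A]

@[simp] lemma psiL_nil (a : A) : psiL a [] = [] := rfl
@[simp] lemma psibarL_nil (a : A) : psibarL a [] = [] := rfl

lemma psiL_cons (a b : A) (z : List A) :
    psiL a (b :: z) = (if b = a then [a] else [a, b]) ++ psiL a z := by
  simp [psiL]

lemma psibarL_cons (a b : A) (z : List A) :
    psibarL a (b :: z) = (if b = a then [a] else [b, a]) ++ psibarL a z := by
  simp [psibarL]

lemma psiL_append (a : A) (x y : List A) : psiL a (x ++ y) = psiL a x ++ psiL a y := by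
  simp [psiL]

lemma psibarL_append (a : A) (x y : List A) :
    psibarL a (x ++ y) = psibarL a x ++ psibarL a y := by
  simp [psibarL]

lemma psiL_nil_or_cons (a : A) (z : List A) : psiL a z = [] ∨ ∃ t, psiL a z = a :: t := by
  cases z with
  | nil => exact Or.inl rfl
  | cons b z =>
    right
    rw [psiL_cons]
    split <;> exact ⟨_, rfl⟩

lemma psiL_ne_nil (a : A) {z : List A} (h : z ≠ []) : ∃ t, psiL a z = a :: t := by
  rcases psiL_nil_or_cons a z with h1 | h1
  · cases z with
    | nil => exact absurd rfl h
    | cons b z => rw [psiL_cons] at h1; split at h1 <;> simp at h1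
  · exact h1

lemma conj_letter (a : A) (z : List A) : psiL a z ++ [a] = a :: psibarL a z := by
  induction z with
  | nil => rfl
  | cons b z ih =>
    rw [psiL_cons, psibarL_cons]
    split <;> simp_all

lemma reverse_psiL (a : A) (z : List A) : (psiL a z).reverse = psibarL a z.reverse := by
  induction z with
  | nil => rfl
  | cons b z ih =>
    rw [psiL_cons, reverse_cons, psibarL_append, reverse_append, ih, psibarL_cons]
    split <;> simp

lemma reverse_psiL_append_a (a : A) (z : List A) :
    (psiL a z ++ [a]).reverse = psiL a z.reverse ++ [a] := by
  rw [reverse_append, reverse_psiL, reverse_singleton]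
  rw [show ([a] ++ psibarL a z.reverse : List A) = a :: psibarL a z.reverse from rfl,
    ← conj_letter]

lemma psiL_inj (a : A) : ∀ {y z : List A}, psiL a y = psiL a z → y = z := by
  intro y
  induction y with
  | nil =>
    intro z h
    cases z with
    | nil => rfl
    | cons b z =>
      rw [psiL_cons] at h
      split at h <;> simp at h
  | cons b y ih =>
    intro z h
    cases z with
    | nil =>
      rw [psiL_cons] at h
      split at h <;> simp at h
    | cons b' z =>
      rw [psiL_cons, psiL_cons] at h
      by_cases hb : b = a <;> by_cases hb' : b' = a <;> simp [hb, hb'] at h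
      · rw [hb, hb', ih h]
      · exfalso
        rcases psiL_nil_or_cons a y with h1 | ⟨t, h1⟩ <;> rw [h1] at h
        · simp at h
        · rw [List.cons_eq_cons] at h
          exact hb' (h.1.symm)
      · exfalso
        rcases psiL_nil_or_cons a z with h1 | ⟨t, h1⟩ <;> rw [h1] at h
        · simp at h
        · rw [List.cons_eq_cons] at h
          exact hb (h.1)
      · rw [h.1, ih h.2]

lemma psibarL_length (a : A) (z : List A) : (psibarL a z).length = (psiL a z).length := by
  induction z with
  | nil => rfl
  | cons b z ih => rw [psiL_cons, psibarL_cons]; split <;> simp [ih]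

lemma psiL_length_reverse (a : A) (z : List A) :
    (psiL a z.reverse).length = (psiL a z).length := by
  rw [← @List.length_reverse _ (psiL a z), reverse_psiL, psibarL_length]

lemma length_le_psiL (a : A) (z : List A) : z.length ≤ (psiL a z).length := by
  induction z with
  | nil => simp
  | cons b z ih => rw [psiL_cons]; split <;> simp <;> omega

lemma psiL_prefix_mono (a : A) {y z : List A} (h : y <+: z) : psiL a y <+: psiL a z := by
  obtain ⟨r, rfl⟩ := h
  rw [psiL_append]; exact ⟨_, rfl⟩

@[simp] lemma psiW_nil (x : List A) : psiW [] x = x := rfl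
@[simp] lemma psibarW_nil (x : List A) : psibarW [] x = x := rfl

lemma psiW_cons (a : A) (u x : List A) : psiW (a :: u) x = psiL a (psiW u x) := rfl
lemma psibarW_cons (a : A) (u x : List A) : psibarW (a :: u) x = psibarL a (psibarW u x) := rfl

lemma reverse_psiW (u : List A) (x : List A) :
    (psiW u x).reverse = psibarW u x.reverse := by
  induction u with
  | nil => rfl
  | cons a u ih => rw [psiW_cons, psibarW_cons, reverse_psiL, ih]

lemma psibarW_head (u : List A) (c : A) : ∃ t, psibarW u [c] = c :: t := by
  induction u with
  | nil => exact ⟨[], rfl⟩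
  | cons a u ih =>
    obtain ⟨t, ht⟩ := ih
    rw [psibarW_cons, ht, psibarL_cons]
    split <;> rename_i h
    · exact ⟨psibarL a t, by rw [h]; rfl⟩
    · exact ⟨a :: psibarL a t, rfl⟩

lemma psiW_last (u : List A) (c : A) : ∃ t, psiW u [c] = t ++ [c] := by
  obtain ⟨t, ht⟩ := psibarW_head u c
  refine ⟨t.reverse, ?_⟩
  have := reverse_psiW u [c]
  rw [show ([c] : List A).reverse = [c] from rfl, ht] at this
  rw [← List.reverse_reverse (psiW u [c]), this]
  simp

lemma psiW_ne_nil (u : List A) (c : A) : psiW u [c] ≠ [] := by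
  obtain ⟨t, ht⟩ := psiW_last u c
  simp [ht]


-- palPlus spec lemmas
lemma palPlus_palindrome (x : List A) : (palPlus x).reverse = palPlus x :=
  (Classical.choose_spec (exists_isPalClosure x)).1.1

lemma prefix_palPlus (x : List A) : x <+: palPlus x :=
  (Classical.choose_spec (exists_isPalClosure x)).1.2

lemma palPlus_min {x q : List A} (h1 : q.reverse = q) (h2 : x <+: q) :
    (palPlus x).length ≤ q.length :=
  (Classical.choose_spec (exists_isPalClosure x)).2 q h1 h2

-- structure lemma V
lemma pal_prefix_structure {Q x : List A} (hQ : Q.reverse = Q) (hx : x <+: Q)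
    (hlen : Q.length ≤ x.length + x.length) :
    Q = x ++ (x.take (Q.length - x.length)).reverse := by
  obtain ⟨t, rfl⟩ := hx
  have hk : t.length ≤ x.length := by
    have := @List.length_append _ x t
    omega
  have h1 : (x ++ t).take t.length = x.take t.length := by
    rw [List.take_append_of_le_length hk]
  have h2 : (x ++ t) = t.reverse ++ x.reverse := by
    conv_lhs => rw [← hQ]
    rw [List.reverse_append]
  have h3 : (t.reverse ++ x.reverse).take t.length = t.reverse := by
    rw [List.take_append_of_le_length (by simp)]
    simp
  have h4 : t.reverse = x.take t.length := by
    conv_lhs => rw [← h3, ← h2]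
    exact h1
  have h5 : t = (x.take t.length).reverse := by rw [h4.symm, List.reverse_reverse]
  have hlen2 : (x ++ t).length - x.length = t.length := by simp
  rw [hlen2]
  rw [← h5]

-- mid palindrome lemma W
lemma drop_palindrome_of_pal_prefix {Q x : List A} (hQ : Q.reverse = Q) (hx : x <+: Q)
    (hlen : Q.length ≤ x.length + x.length) :
    (x.drop (Q.length - x.length)).reverse = x.drop (Q.length - x.length) := by
  set k := Q.length - x.length with hk
  have hkx : k ≤ x.length := by
    have := hx.length_le
    omega
  have hV := pal_prefix_structure hQ hx hlen
  have hsplit : x = x.take k ++ x.drop k := (List.take_append_drop k x).symm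
  have h1 : Q = x.take k ++ x.drop k ++ (x.take k).reverse := by
    rw [List.take_append_drop]; exact hV
  have h2 : Q.reverse = x.take k ++ ((x.drop k).reverse ++ (x.take k).reverse) := by
    rw [h1, List.reverse_append, List.reverse_reverse, List.reverse_append]
  have h3 : Q = x.take k ++ ((x.drop k).reverse ++ (x.take k).reverse) := by
    rw [← hQ]; exact h2
  rw [h1, List.append_assoc] at h3
  have h4 := List.append_cancel_left h3
  exact (List.append_cancel_right h4).symm

-- MIN lemma
lemma palPlus_length_le_of_drop_pal {x : List A} {j : ℕ} (hj : j ≤ x.length)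
    (h : (x.drop j).reverse = x.drop j) :
    (palPlus x).length ≤ x.length + j := by
  have hxrev : x.reverse = x.drop j ++ (x.take j).reverse := by
    conv_lhs => rw [← List.take_append_drop j x]
    rw [List.reverse_append, h]
  have hC : (x ++ (x.take j).reverse).reverse = x ++ (x.take j).reverse := by
    rw [List.reverse_append, List.reverse_reverse, hxrev, ← List.append_assoc,
      List.take_append_drop]
  have hmin := palPlus_min hC ⟨(x.take j).reverse, rfl⟩
  have htj : (x.take j).length ≤ j := by simp
  have : (x ++ (x.take j).reverse).length = x.length + (x.take j).length := by simp
  omega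

lemma palPlus_length_le_two (x : List A) : (palPlus x).length ≤ x.length + x.length :=
  palPlus_length_le_of_drop_pal le_rfl (by simp)

lemma length_le_palPlus (x : List A) : x.length ≤ (palPlus x).length :=
  (prefix_palPlus x).length_le

-- uniqueness lemma U
lemma palPlus_eq_of_min {x Q : List A} (hQ : Q.reverse = Q) (hx : x <+: Q)
    (hmin : ∀ Q', Q'.reverse = Q' → x <+: Q' → Q.length ≤ Q'.length) :
    palPlus x = Q := by
  have h1 : (palPlus x).length ≤ Q.length := palPlus_min hQ hx
  have h2 : Q.length ≤ (palPlus x).length := hmin _ (palPlus_palindrome x) (prefix_palPlus x)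
  have hlen : (palPlus x).length = Q.length := le_antisymm h1 h2
  have hQ2 : Q.length ≤ x.length + x.length := le_trans h2 (palPlus_length_le_two x)
  rw [pal_prefix_structure hQ hx hQ2,
    pal_prefix_structure (palPlus_palindrome x) (prefix_palPlus x)
      (palPlus_length_le_two x), hlen]

lemma palPlus_of_palindrome {x : List A} (h : x.reverse = x) : palPlus x = x :=
  palPlus_eq_of_min h (List.prefix_refl x) (fun _ _ h2 => h2.length_le)

@[simp] lemma pal_nil : pal ([] : List A) = [] := rfl

lemma pal_append_singleton (u : List A) (c : A) :
    pal (u ++ [c]) = palPlus (pal u ++ [c]) := by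
  simp [pal, List.foldl_append]

-- suffix decomposition helper
lemma suffix_append_cases {t l r : List A} (h : t <:+ l ++ r) :
    t <:+ r ∨ ∃ s, s <:+ l ∧ s ≠ [] ∧ t = s ++ r := by
  obtain ⟨v, hv⟩ := h
  rcases le_or_gt t.length r.length with hle | hlt
  · left
    have h1 : t.reverse <+: (l ++ r).reverse := by
      rw [← hv]; simp
    have h2 : r.reverse <+: (l ++ r).reverse := by simp
    have := List.prefix_of_prefix_length_le h1 h2 (by simpa using hle)
    rwa [List.reverse_prefix] at this
  · right
    have hvl : v.length ≤ l.length := by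
      have := congrArg List.length hv
      simp at this; omega
    have hvpre : v <+: l := List.prefix_of_prefix_length_le ⟨t, hv⟩ ⟨r, rfl⟩ hvl
    obtain ⟨s, rfl⟩ := hvpre
    refine ⟨s, ⟨v, rfl⟩, ?_, ?_⟩
    · intro h0
      subst h0
      simp only [List.append_nil] at hv
      have := congrArg List.length hv
      simp at this; omega
    · rw [List.append_assoc] at hv
      exact List.append_cancel_left hv

lemma pal_head_eq_last {t : List A} {e f : A} {m : List A} (ht : t.reverse = t)
    (h : t = e :: (m ++ [f])) : e = f := by
  have : t.reverse = f :: (m.reverse ++ [e]) := by rw [h]; simp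
  rw [ht, h] at this
  exact (List.cons_eq_cons.mp this).1

-- S1 : palindromic suffixes of psiL a z ++ [a]
lemma S1 (a : A) : ∀ (z t : List A), t ≠ [] → t <:+ psiL a z ++ [a] → t.reverse = t →
    ∃ j, j ≤ z.length ∧ (z.drop j).reverse = z.drop j ∧ t = psiL a (z.drop j) ++ [a] := by
  intro z
  induction z with
  | nil =>
    intro t ht hsuf _
    refine ⟨0, by simp, by simp, ?_⟩
    simp only [psiL_nil, List.nil_append] at hsuf ⊢
    rcases List.suffix_cons_iff.mp hsuf with h | h
    · exact h
    · simp at h; exact absurd h ht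
  | cons b z ih =>
    intro t ht hsuf hpal
    rw [psiL_cons, List.append_assoc] at hsuf
    rcases suffix_append_cases hsuf with h | ⟨s, hs, hsne, hts⟩
    · obtain ⟨j, hj, hd, he⟩ := ih t ht h hpal
      exact ⟨j + 1, by simp; omega, by simpa using hd, by simpa using he⟩
    · have hwhole : t = psiL a (b :: z) ++ [a] →
          ∃ j, j ≤ (b :: z).length ∧ ((b :: z).drop j).reverse = (b :: z).drop j ∧
            t = psiL a ((b :: z).drop j) ++ [a] := by
        intro he
        refine ⟨0, by simp, ?_, by simpa using he⟩
        have hrev : t.reverse = psiL a (b :: z).reverse ++ [a] := by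
          rw [he, reverse_psiL_append_a]
        rw [hpal, he] at hrev
        have := psiL_inj a (List.append_cancel_right hrev)
        simpa using this.symm
      split at hs
      · rename_i hba
        rcases List.suffix_cons_iff.mp hs with h | h
        · apply hwhole
          rw [hts, h, psiL_cons, if_pos hba, List.append_assoc]
        · simp at h; exact absurd h hsne
      · rename_i hba
        rcases List.suffix_cons_iff.mp hs with h | h
        · apply hwhole
          rw [hts, h, psiL_cons, if_neg hba, List.append_assoc]
        · rcases List.suffix_cons_iff.mp h with h2 | h2
          · exact absurd (pal_head_eq_last (m := psiL a z) hpal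
              (by rw [hts, h2]; rfl)) hba
          · simp at h2; exact absurd h2 hsne

-- S2 : palindromic suffixes of psiL a (z₀ ++ [c]) with c ≠ a
lemma S2 (a c : A) (hca : c ≠ a) : ∀ (z₀ t : List A), t ≠ [] → t <:+ psiL a (z₀ ++ [c]) →
    t.reverse = t →
    ∃ j v, (z₀ ++ [c]).drop j = c :: v ∧ (c :: v).reverse = c :: v ∧ t = c :: psiL a v := by
  intro z₀
  induction z₀ with
  | nil =>
    intro t ht hsuf hpal
    have hx : psiL a ([] ++ [c]) = [a, c] := by
      simp [psiL_cons, if_neg hca]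
    rw [hx] at hsuf
    rcases List.suffix_cons_iff.mp hsuf with h | h
    · exfalso
      apply hca
      exact (pal_head_eq_last (m := ([] : List A)) hpal (by rw [h]; rfl)).symm
    · rcases List.suffix_cons_iff.mp h with h2 | h2
      · exact ⟨0, [], by simp, by simp, by simpa using h2⟩
      · simp at h2; exact absurd h2 ht
  | cons b z₀ ih =>
    intro t ht hsuf hpal
    have hshape : psiL a (z₀ ++ [c]) = psiL a z₀ ++ [a, c] := by
      rw [psiL_append, psiL_cons, if_neg hca]
      rfl
    rw [List.cons_append, psiL_cons] at hsuf
    rcases suffix_append_cases hsuf with h | ⟨s, hs, hsne, hts⟩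
    · obtain ⟨j, v, hd, hp, he⟩ := ih t ht h hpal
      exact ⟨j + 1, v, by simpa using hd, hp, he⟩
    · split at hs
      · rename_i hba
        -- block = [a], s = [a] : t = a :: ... ++ [c], contra
        rcases List.suffix_cons_iff.mp hs with h | h
        · exact absurd (pal_head_eq_last (m := psiL a z₀ ++ [a]) hpal
            (by rw [hts, h, hshape]; simp)).symm hca
        · simp at h; exact absurd h hsne
      · rename_i hba
        rcases List.suffix_cons_iff.mp hs with h | h
        · -- s = [a, b] : whole, head a, last c, contra
          exact absurd (pal_head_eq_last (m := b :: psiL a z₀ ++ [a]) hpal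
            (by rw [hts, h, hshape]; simp)).symm hca
        · rcases List.suffix_cons_iff.mp h with h2 | h2
          · -- s = [b] : t = b :: psiL a z₀ ++ [a, c]; palindrome forces b = c
            have htb : t = b :: (psiL a z₀ ++ [a, c]) := by
              rw [hts, h2, hshape]; rfl
            have hbc : b = c :=
              pal_head_eq_last (m := psiL a z₀ ++ [a]) hpal (by rw [htb]; simp)
            have hz₀ : z₀.reverse = z₀ := by
              have hkey : ([a] : List A) ++ (psibarL a z₀.reverse ++ [c])
                  = psiL a z₀.reverse ++ [a, c] := by
                rw [show ([a] : List A) ++ (psibarL a z₀.reverse ++ [c])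
                    = (a :: psibarL a z₀.reverse) ++ [c] from rfl, ← conj_letter]
                simp
              have hrev : t.reverse = b :: (psiL a z₀.reverse ++ [a, c]) := by
                rw [htb, hbc]
                simp only [List.reverse_cons, List.reverse_append, reverse_psiL,
                  List.reverse_nil, List.nil_append, List.append_assoc]
                rw [hkey]
                rfl
              rw [hpal, htb] at hrev
              have h5 := (List.cons_eq_cons.mp hrev).2
              have h6 : psiL a z₀ ++ [a, c] = psiL a z₀.reverse ++ [a, c] := h5
              exact (psiL_inj a (List.append_cancel_right h6)).symm
            refine ⟨0, z₀ ++ [c], by rw [List.drop_zero, List.cons_append, hbc], ?_, ?_⟩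
            · simp [hz₀]
            · rw [htb, hbc, hshape]
          · simp at h2; exact absurd h2 hsne


-- K1
lemma K1 (a : A) (z : List A) : palPlus (psiL a z ++ [a]) = psiL a (palPlus z) ++ [a] := by
  set x := psiL a z ++ [a] with hx
  set R := palPlus z with hR
  have hzR : z <+: R := prefix_palPlus z
  have hRpal := palPlus_palindrome z
  have hR2 : R.length ≤ z.length + z.length := palPlus_length_le_two z
  have hzRlen := length_le_palPlus z
  set k0 := R.length - z.length with hk0
  have hk0z : k0 ≤ z.length := by omega
  have hV : R = z ++ (z.take k0).reverse := pal_prefix_structure hRpal hzR hR2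
  have hxlen0 : x.length = (psiL a z).length + 1 := by rw [hx]; simp
  have hQlen : (psiL a R ++ [a]).length = x.length + (psiL a (z.take k0)).length := by
    rw [hV, psiL_append]
    have h1 := psiL_length_reverse a (z.take k0)
    simp only [List.length_append, List.length_cons, List.length_nil]
    omega
  apply palPlus_eq_of_min
  · rw [reverse_psiL_append_a, hRpal]
  · obtain ⟨r, hr⟩ := hzR
    have hQ : psiL a R ++ [a] = psiL a z ++ (psiL a r ++ [a]) := by
      rw [← hr, psiL_append, List.append_assoc]
    rcases psiL_nil_or_cons a r with h0 | ⟨tt, h0⟩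
    · rw [hQ, h0, hx]
      simp
    · rw [hQ, h0, hx]
      refine ⟨tt ++ [a], ?_⟩
      simp
  · intro Q' hQ'pal hxQ'
    have hxQ'len := hxQ'.length_le
    set k' := Q'.length - x.length with hk'
    rcases le_or_gt x.length k' with hcase | hcase
    · have h1 : (psiL a (z.take k0)).length ≤ (psiL a z).length :=
        (psiL_prefix_mono a (List.take_prefix k0 z)).length_le
      omega
    · have hQ'2 : Q'.length ≤ x.length + x.length := by omega
      have ht_pal := drop_palindrome_of_pal_prefix hQ'pal hxQ' hQ'2
      have hdlen : (x.drop k').length = x.length - k' := by simp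
      have htne : x.drop k' ≠ [] := by
        intro h0; rw [h0] at hdlen; simp at hdlen; omega
      obtain ⟨j, hj, hjpal, hjt⟩ := S1 a z (x.drop k') htne
        (by rw [hx]; exact List.drop_suffix _ _) ht_pal
      have hsplit : (psiL a z).length
          = (psiL a (z.take j)).length + (psiL a (z.drop j)).length := by
        rw [← List.length_append, ← psiL_append, List.take_append_drop]
      have hlen2 : (x.drop k').length = (psiL a (z.drop j)).length + 1 := by rw [hjt]; simp
      have hmin : R.length ≤ z.length + j := palPlus_length_le_of_drop_pal hj hjpal
      have hk0j : k0 ≤ j := by omega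
      have hmono : (psiL a (z.take k0)).length ≤ (psiL a (z.take j)).length :=
        (psiL_prefix_mono a (List.take_prefix_take_left hk0j)).length_le
      omega

-- K2
lemma K2 (a c : A) (hca : c ≠ a) (z₀ : List A) :
    palPlus (psiL a (z₀ ++ [c])) = psiL a (palPlus (z₀ ++ [c])) ++ [a] := by
  set z := z₀ ++ [c] with hz
  set x := psiL a z with hx
  set R := palPlus z with hR
  have hzR : z <+: R := prefix_palPlus z
  have hRpal := palPlus_palindrome z
  have hR2 : R.length ≤ z.length + z.length := palPlus_length_le_two z
  have hzRlen := length_le_palPlus z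
  set k0 := R.length - z.length with hk0
  have hk0z : k0 ≤ z.length := by omega
  have hV : R = z ++ (z.take k0).reverse := pal_prefix_structure hRpal hzR hR2
  have hbr1 : R.length = (palPlus z).length := rfl
  have hbr2 : x.length = (psiL a z).length := rfl
  have hQlen : (psiL a R ++ [a]).length = x.length + (psiL a (z.take k0)).length + 1 := by
    rw [hV, psiL_append]
    have h1 := psiL_length_reverse a (z.take k0)
    simp only [List.length_append, List.length_cons, List.length_nil, hx]
    omega
  have hk0small : k0 ≤ z₀.length := by
    have hdz : z.drop z₀.length = [c] := by rw [hz]; simp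
    have := palPlus_length_le_of_drop_pal (j := z₀.length) (x := z)
      (by rw [hz]; simp) (by rw [hdz]; rfl)
    omega
  have hzz0 : (psiL a z).length = (psiL a z₀).length + 2 := by
    rw [hz, psiL_append, psiL_cons, if_neg hca]
    simp
  have hQsmall : (psiL a (z.take k0)).length + 1 ≤ (psiL a z).length := by
    have h1 : (psiL a (z.take k0)).length ≤ (psiL a z₀).length := by
      have hpref : z.take k0 <+: z₀ := by
        have := (List.take_prefix_take_left hk0small : z.take k0 <+: z.take z₀.length)
        rw [hz, List.take_left] at this
        exact this
      exact (psiL_prefix_mono a hpref).length_le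
    omega
  apply palPlus_eq_of_min
  · rw [reverse_psiL_append_a, hRpal]
  · exact (psiL_prefix_mono a hzR).trans ⟨[a], rfl⟩
  · intro Q' hQ'pal hxQ'
    have hxQ'len := hxQ'.length_le
    set k' := Q'.length - x.length with hk'
    rcases le_or_gt x.length k' with hcase | hcase
    · omega
    · have hQ'2 : Q'.length ≤ x.length + x.length := by omega
      have ht_pal := drop_palindrome_of_pal_prefix hQ'pal hxQ' hQ'2
      have hdlen : (x.drop k').length = x.length - k' := by simp
      have htne : x.drop k' ≠ [] := by
        intro h0; rw [h0] at hdlen; simp at hdlen; omega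
      obtain ⟨j, v, hjv, hvpal, hjt⟩ := S2 a c hca z₀ (x.drop k') htne
        (by rw [hx, hz]; exact List.drop_suffix _ _) ht_pal
      have hjz : j ≤ z.length := by
        by_contra hcon
        push_neg at hcon
        have : z.drop j = [] := List.drop_eq_nil_of_le (le_of_lt hcon)
        rw [hz] at this
        rw [this] at hjv
        simp at hjv
      have hdjlen : (z.drop j).length = z.length - j := by simp
      have hsplit : (psiL a z).length
          = (psiL a (z.take j)).length + (psiL a (z.drop j)).length := by
        rw [← List.length_append, ← psiL_append, List.take_append_drop]
      have hjv' : z.drop j = c :: v := hjv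
      have hdj : (psiL a (z.drop j)).length = (psiL a v).length + 2 := by
        rw [hjv', psiL_cons, if_neg hca]
        simp
      have hlen2 : (x.drop k').length = (psiL a v).length + 1 := by rw [hjt]; simp
      have hjpal : (z.drop j).reverse = z.drop j := by
        rw [hjv']; exact hvpal
      have hmin : R.length ≤ z.length + j := palPlus_length_le_of_drop_pal hjz hjpal
      have hk0j : k0 ≤ j := by omega
      have hmono : (psiL a (z.take k0)).length ≤ (psiL a (z.take j)).length :=
        (psiL_prefix_mono a (List.take_prefix_take_left hk0j)).length_le
      omega

-- Justin's formula, left version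
lemma J1 (a : A) (v : List A) : pal (a :: v) = psiL a (pal v) ++ [a] := by
  induction v using List.reverseRecOn with
  | nil =>
    have h1 : pal [a] = palPlus [a] := by simp [pal]
    rw [show (a :: ([] : List A)) = [a] from rfl, h1, palPlus_of_palindrome (by simp)]
    rfl
  | append_singleton v e ih =>
    have h1 : pal (a :: (v ++ [e])) = palPlus (pal (a :: v) ++ [e]) := by
      rw [show a :: (v ++ [e]) = (a :: v) ++ [e] from rfl, pal_append_singleton]
    rw [h1, ih]
    by_cases he : e = a
    · rw [show psiL a (pal v) ++ [a] ++ [e] = (psiL a (pal v ++ [e])) ++ [a] by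
        rw [psiL_append, psiL_cons, if_pos he]; simp [he]]
      rw [K1 a (pal v ++ [e]), ← pal_append_singleton]
    · rw [show psiL a (pal v) ++ [a] ++ [e] = psiL a (pal v ++ [e]) by
        rw [psiL_append, psiL_cons, if_neg he]; simp]
      rw [K2 a e he (pal v), ← pal_append_singleton]

-- conjugation identity
lemma conjW (u x : List A) : psiW u x ++ pal u = pal u ++ psibarW u x := by
  induction u with
  | nil => simp
  | cons a u ih =>
    rw [psiW_cons, psibarW_cons, J1]
    calc psiL a (psiW u x) ++ (psiL a (pal u) ++ [a])
        = psiL a (psiW u x ++ pal u) ++ [a] := by rw [psiL_append]; simp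
      _ = psiL a (pal u ++ psibarW u x) ++ [a] := by rw [ih]
      _ = psiL a (pal u) ++ (psiL a (psibarW u x) ++ [a]) := by rw [psiL_append]; simp
      _ = psiL a (pal u) ++ ([a] ++ psibarL a (psibarW u x)) := by rw [conj_letter]; rfl
      _ = psiL a (pal u) ++ [a] ++ psibarL a (psibarW u x) := by simp

-- PR : prefix and length lemma
lemma PR (c d : A) (hcd : c ≠ d) : ∀ u : List A,
    (pal u ++ [c] <+: psiW u [c] ++ psiW u [d]) ∧
    (pal u).length + 2 ≤ (psiW u [c]).length + (psiW u [d]).length := by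
  intro u
  induction u with
  | nil =>
    constructor
    · exact ⟨[d], rfl⟩
    · simp
  | cons a u ih =>
    obtain ⟨hpre, hlen⟩ := ih
    obtain ⟨rest, hrest⟩ := hpre
    have hrestne : rest ≠ [] := by
      intro h0
      rw [h0] at hrest
      have := congrArg List.length hrest
      simp at this
      omega
    obtain ⟨y0, hy0⟩ := psiW_last u d
    obtain ⟨r0, hr0⟩ : ∃ r0, rest = r0 ++ [d] := by
      rcases List.eq_nil_or_concat rest with h | ⟨r0, e, h⟩
      · exact absurd h hrestne
      · rw [List.concat_eq_append] at h
        refine ⟨r0, ?_⟩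
        rw [h]
        have h1 : ((pal u ++ [c]) ++ r0) ++ [e] = (psiW u [c] ++ y0) ++ [d] := by
          rw [List.append_assoc, ← h, hrest, hy0, List.append_assoc]
        have h2 := (List.append_inj' h1 (by simp)).2
        rw [(List.cons_eq_cons.mp h2).1]
    have hXY : psiW (a :: u) [c] ++ psiW (a :: u) [d]
        = psiL a ((pal u ++ [c]) ++ rest) := by
      rw [psiW_cons, psiW_cons, ← psiL_append, hrest]
    constructor
    · rw [hXY, J1, psiL_append]
      by_cases hc : c = a
      · subst hc
        rw [show psiL c (pal u ++ [c]) = psiL c (pal u) ++ [c] by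
          rw [psiL_append, psiL_cons]; simp]
        obtain ⟨tt, htt⟩ := psiL_ne_nil c hrestne
        refine ⟨tt, ?_⟩
        rw [htt]
        simp
      · rw [show psiL a (pal u ++ [c]) = psiL a (pal u) ++ [a, c] by
          rw [psiL_append, psiL_cons, if_neg hc]; rfl]
        refine ⟨psiL a rest, ?_⟩
        simp
    · have e1 : (psiW (a :: u) [c]).length + (psiW (a :: u) [d]).length
          = (psiL a (pal u)).length + ((psiL a [c]).length
            + ((psiL a r0).length + (psiL a [d]).length)) := by
        have h3 : psiW (a :: u) [c] ++ psiW (a :: u) [d]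
            = psiL a (pal u) ++ (psiL a [c] ++ (psiL a r0 ++ psiL a [d])) := by
          rw [hXY, hr0]
          rw [← psiL_append, ← psiL_append, ← psiL_append]
          congr 1
          simp
        have := congrArg List.length h3
        simpa using this
      have hsingle : ∀ e : A, (psiL a [e]).length = if e = a then 1 else 2 := by
        intro e
        rw [psiL_cons]
        split <;> simp
      have hc3 : 3 ≤ (psiL a [c]).length + (psiL a [d]).length := by
        rw [hsingle, hsingle]
        by_cases hc : c = a <;> by_cases hd : d = a
        · exact absurd (hc.trans hd.symm) hcd
        · simp [hc, hd]
        · simp [hc, hd]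
        · simp [hc, hd]
      have e2 : (pal (a :: u)).length = (psiL a (pal u)).length + 1 := by
        rw [J1]; simp
      omega


-- gcp lemmas
lemma gcp_nil_left (y : List A) : gcp ([] : List A) y = [] := by cases y <;> rfl

lemma gcp_cons (e f : A) (x y : List A) :
    gcp (e :: x) (f :: y) = if e = f then e :: gcp x y else [] := rfl

lemma gcp_prefix_left : ∀ (x y : List A), gcp x y <+: x := by
  intro x
  induction x with
  | nil => intro y; rw [gcp_nil_left]
  | cons e x ih =>
    intro y
    cases y with
    | nil => exact List.nil_prefix
    | cons f y =>
      rw [gcp_cons]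
      split
      · exact List.cons_prefix_cons.mpr ⟨rfl, ih y⟩
      · exact List.nil_prefix

lemma gcp_prefix_right : ∀ (x y : List A), gcp x y <+: y := by
  intro x
  induction x with
  | nil => intro y; rw [gcp_nil_left]; exact List.nil_prefix
  | cons e x ih =>
    intro y
    cases y with
    | nil => exact List.nil_prefix
    | cons f y =>
      rw [gcp_cons]
      split
      · rename_i h
        exact List.cons_prefix_cons.mpr ⟨h, ih y⟩
      · exact List.nil_prefix

lemma prefix_gcp : ∀ (p x y : List A), p <+: x → p <+: y → p <+: gcp x y := by
  intro p
  induction p with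
  | nil => intro x y _ _; exact List.nil_prefix
  | cons e p ih =>
    intro x y hx hy
    cases x with
    | nil => exact absurd hx.length_le (by simp)
    | cons e1 x =>
      cases y with
      | nil => exact absurd hy.length_le (by simp)
      | cons f1 y =>
        obtain ⟨he1, hpx⟩ := List.cons_prefix_cons.mp hx
        obtain ⟨hf1, hpy⟩ := List.cons_prefix_cons.mp hy
        rw [gcp_cons, ← he1, ← hf1, if_pos rfl]
        exact List.cons_prefix_cons.mpr ⟨rfl, ih x y hpx hpy⟩

-- the key gcp computation
lemma gcp_conj_eq {s1 s2 v m1 m2 : List A} {e f : A} (hef : e ≠ f)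
    (h1 : s1 ++ v = v ++ (e :: m1)) (h2 : s2 ++ v = v ++ (f :: m2))
    (hl1 : v.length ≤ s1.length) (hl2 : v.length ≤ s2.length) :
    gcp s1 s2 = v := by
  have hv1 : v <+: s1 :=
    List.prefix_of_prefix_length_le ⟨e :: m1, h1.symm⟩ ⟨v, rfl⟩ hl1
  have hv2 : v <+: s2 :=
    List.prefix_of_prefix_length_le ⟨f :: m2, h2.symm⟩ ⟨v, rfl⟩ hl2
  have hvg : v <+: gcp s1 s2 := prefix_gcp v s1 s2 hv1 hv2
  have hg1 : gcp s1 s2 <+: v ++ (e :: m1) := by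
    rw [← h1]
    exact (gcp_prefix_left s1 s2).trans ⟨v, rfl⟩
  have hg2 : gcp s1 s2 <+: v ++ (f :: m2) := by
    rw [← h2]
    exact (gcp_prefix_right s1 s2).trans ⟨v, rfl⟩
  have hgs : gcp s1 s2 <+: v := by
    by_contra hcon
    have hlen : v.length < (gcp s1 s2).length := by
      by_contra hlen
      push_neg at hlen
      exact hcon (List.prefix_of_prefix_length_le hg1 ⟨e :: m1, rfl⟩ hlen)
    obtain ⟨m, hm⟩ := hvg
    have hmne : m ≠ [] := by
      intro h0
      rw [h0] at hm
      rw [← hm] at hlen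
      simp at hlen
    obtain ⟨g, m', rfl⟩ : ∃ g m', m = g :: m' := by
      cases m with
      | nil => exact absurd rfl hmne
      | cons g m' => exact ⟨g, m', rfl⟩
    have hm1 : g :: m' <+: e :: m1 := by
      obtain ⟨t, ht⟩ := hg1
      rw [← hm, List.append_assoc] at ht
      exact ⟨t, List.append_cancel_left ht⟩
    have hm2 : g :: m' <+: f :: m2 := by
      obtain ⟨t, ht⟩ := hg2
      rw [← hm, List.append_assoc] at ht
      exact ⟨t, List.append_cancel_left ht⟩
    have he : g = e := (List.cons_prefix_cons.mp hm1).1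
    have hf : g = f := (List.cons_prefix_cons.mp hm2).1
    exact hef (he ▸ hf)
  exact hgs.eq_of_length (le_antisymm hgs.length_le hvg.length_le)

end Dev

/-- for the w-conjugate σ of ψ_u ∘ π and letters a ≠ b,
`Pal(u) = gcs(σ(ab),σ(ba)) · gcp(σ(ab),σ(ba))`. -/
theorem pal_eq_gcs_append_gcp {A : Type*} [Fintype A] [DecidableEq A]
    (hA : 1 < Fintype.card A) (u : List A) (π : Equiv.Perm A)
    (w : List A) (hw : w <+: pal u)
    (σ : List A → List A) (hσhom : IsListHom σ)
    (hσ : ∀ a : A, psiW u [π a] ++ w = w ++ σ [a])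
    (a b : A) (hab : a ≠ b) :
    pal u = gcs (σ [a, b]) (σ [b, a]) ++ gcp (σ [a, b]) (σ [b, a]) := by
  classical
  obtain ⟨w', hww'⟩ := hw
  have hcd : π a ≠ π b := fun h => hab (π.injective h)
  have hσa := hσ a
  have hσb := hσ b
  have hs1 : σ [a, b] = σ [a] ++ σ [b] := by
    have := hσhom [a] [b]
    simpa using this
  have hs2 : σ [b, a] = σ [b] ++ σ [a] := by
    have := hσhom [b] [a]
    simpa using this
  have hla : (σ [a]).length = (psiW u [π a]).length := by
    have := congrArg List.length hσa
    simp at this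
    omega
  have hlb : (σ [b]).length = (psiW u [π b]).length := by
    have := congrArg List.length hσb
    simp at this
    omega
  have hPR1 := (PR (π a) (π b) hcd u).2
  have hPlen : (pal u).length = w.length + w'.length := by
    rw [← hww']
    simp
  -- key conjugation equalities (right side, for gcp)
  have hkey1 : σ [a] ++ σ [b] ++ w' = w' ++ (psibarW u [π a] ++ psibarW u [π b]) := by
    apply List.append_cancel_left (as := w)
    calc w ++ (σ [a] ++ σ [b] ++ w')
        = ((w ++ σ [a]) ++ σ [b]) ++ w' := by simp [List.append_assoc]
      _ = ((psiW u [π a] ++ w) ++ σ [b]) ++ w' := by rw [hσa]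
      _ = psiW u [π a] ++ ((w ++ σ [b]) ++ w') := by simp [List.append_assoc]
      _ = psiW u [π a] ++ ((psiW u [π b] ++ w) ++ w') := by rw [hσb]
      _ = psiW u [π a] ++ (psiW u [π b] ++ pal u) := by rw [List.append_assoc, hww']
      _ = psiW u [π a] ++ (pal u ++ psibarW u [π b]) := by rw [conjW]
      _ = (psiW u [π a] ++ pal u) ++ psibarW u [π b] := by simp [List.append_assoc]
      _ = (pal u ++ psibarW u [π a]) ++ psibarW u [π b] := by rw [conjW]
      _ = (w ++ w') ++ (psibarW u [π a] ++ psibarW u [π b]) := by rw [hww']; simp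
      _ = w ++ (w' ++ (psibarW u [π a] ++ psibarW u [π b])) := by simp
  have hkey2 : σ [b] ++ σ [a] ++ w' = w' ++ (psibarW u [π b] ++ psibarW u [π a]) := by
    apply List.append_cancel_left (as := w)
    calc w ++ (σ [b] ++ σ [a] ++ w')
        = ((w ++ σ [b]) ++ σ [a]) ++ w' := by simp [List.append_assoc]
      _ = ((psiW u [π b] ++ w) ++ σ [a]) ++ w' := by rw [hσb]
      _ = psiW u [π b] ++ ((w ++ σ [a]) ++ w') := by simp [List.append_assoc]
      _ = psiW u [π b] ++ ((psiW u [π a] ++ w) ++ w') := by rw [hσa]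
      _ = psiW u [π b] ++ (psiW u [π a] ++ pal u) := by rw [List.append_assoc, hww']
      _ = psiW u [π b] ++ (pal u ++ psibarW u [π a]) := by rw [conjW]
      _ = (psiW u [π b] ++ pal u) ++ psibarW u [π a] := by simp [List.append_assoc]
      _ = (pal u ++ psibarW u [π b]) ++ psibarW u [π a] := by rw [conjW]
      _ = (w ++ w') ++ (psibarW u [π b] ++ psibarW u [π a]) := by rw [hww']; simp
      _ = w ++ (w' ++ (psibarW u [π b] ++ psibarW u [π a])) := by simp
  -- left-side equalities (for gcs)
  have hwkey1 : w ++ (σ [a] ++ σ [b]) = (psiW u [π a] ++ psiW u [π b]) ++ w := by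
    calc w ++ (σ [a] ++ σ [b]) = (w ++ σ [a]) ++ σ [b] := by simp
      _ = (psiW u [π a] ++ w) ++ σ [b] := by rw [hσa]
      _ = psiW u [π a] ++ (w ++ σ [b]) := by simp
      _ = psiW u [π a] ++ (psiW u [π b] ++ w) := by rw [hσb]
      _ = (psiW u [π a] ++ psiW u [π b]) ++ w := by simp
  have hwkey2 : w ++ (σ [b] ++ σ [a]) = (psiW u [π b] ++ psiW u [π a]) ++ w := by
    calc w ++ (σ [b] ++ σ [a]) = (w ++ σ [b]) ++ σ [a] := by simp
      _ = (psiW u [π b] ++ w) ++ σ [a] := by rw [hσb]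
      _ = psiW u [π b] ++ (w ++ σ [a]) := by simp
      _ = psiW u [π b] ++ (psiW u [π a] ++ w) := by rw [hσa]
      _ = (psiW u [π b] ++ psiW u [π a]) ++ w := by simp
  obtain ⟨t1, ht1⟩ := psibarW_head u (π a)
  obtain ⟨t2, ht2⟩ := psibarW_head u (π b)
  -- gcp computation
  have hgcp : gcp (σ [a, b]) (σ [b, a]) = w' := by
    rw [hs1, hs2]
    refine gcp_conj_eq hcd (m1 := t1 ++ psibarW u [π b]) (m2 := t2 ++ psibarW u [π a])
      ?_ ?_ ?_ ?_
    · rw [hkey1, ht1]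
      rfl
    · rw [hkey2, ht2]
      rfl
    · simp only [List.length_append]
      omega
    · simp only [List.length_append]
      omega
  -- gcs computation
  have hgcs : gcs (σ [a, b]) (σ [b, a]) = w := by
    have hra : (psiW u [π a]).reverse = psibarW u [π a] := by
      rw [reverse_psiW, List.reverse_singleton]
    have hrb : (psiW u [π b]).reverse = psibarW u [π b] := by
      rw [reverse_psiW, List.reverse_singleton]
    have hrev1 : (σ [a] ++ σ [b]).reverse ++ w.reverse
        = w.reverse ++ (psibarW u [π b] ++ psibarW u [π a]) := by
      have h0 := congrArg List.reverse hwkey1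
      simp only [List.reverse_append] at h0
      rw [hra, hrb] at h0
      simp only [List.reverse_append]
      exact h0
    have hrev2 : (σ [b] ++ σ [a]).reverse ++ w.reverse
        = w.reverse ++ (psibarW u [π a] ++ psibarW u [π b]) := by
      have h0 := congrArg List.reverse hwkey2
      simp only [List.reverse_append] at h0
      rw [hra, hrb] at h0
      simp only [List.reverse_append]
      exact h0
    have hgr : gcp (σ [a, b]).reverse (σ [b, a]).reverse = w.reverse := by
      rw [hs1, hs2]
      refine gcp_conj_eq hcd.symm (m1 := t2 ++ psibarW u [π a]) (m2 := t1 ++ psibarW u [π b])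
        ?_ ?_ ?_ ?_
      · rw [hrev1, ht2]
        rfl
      · rw [hrev2, ht1]
        rfl
      · simp only [List.length_reverse, List.length_append]
        omega
      · simp only [List.length_reverse, List.length_append]
        omega
    show (gcp (σ [a, b]).reverse (σ [b, a]).reverse).reverse = w
    rw [hgr, List.reverse_reverse]
  rw [hgcp, hgcs, hww']
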